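/- For every integer i ≥ 1 and every finite alphabet A with |A| ≥ 2, the maximum cardinality of a code C ⊆ (A⁴)ⁱ that is unambiguous (simultaneously for both terminals) for the Scenario-A.2 i-shot Butterfly channel, taken over all choices of per-round node functions, equals (|A| − 1)ⁱ. Equivalently, the i-shot capacity of the Butterfly Network when the adversary may change the attacked vulnerable edge each round is log_{|A|}(|A| − 1), the same as its one-shot capacity. -/

import Mathlib

/-!
Only the `e₅`-symbol `h(x₁, x₂)` of a round carries information to `T₁`: the adversary on `e₉`
sets `e₁₀` freely, and on `e₁` or `e₂` moves `h` along the row or the column (the cross)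
through `(x₁, x₂)`. Two crosses always meet, so some symbol `c` is not the constant value of
any cross. Color each input by a value `≠ c` of `h` on its cross, its own value when that is
`≠ c`: inputs of equal color are confusable at `T₁`, so an unambiguous code injects into the
`(|A| - 1)^i` color sequences.

Conversely, fix an erasure symbol `c₀` and repeat a symbol `a ≠ c₀` on all source edges. `V₁`
and `V₂` forward a symbol only when both copies agree and erase otherwise, `V₃` forwards
whichever input is not erased, and each terminal reads its direct edge unless it is erased.
-/

/-- A code `C` is unambiguous for the channel `Ω` if distinct codewords have
disjoint fan-out sets. -/
def Unambiguous {X Y : Type*} (Ω : X → Set Y) (C : Finset X) : Prop :=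
  ∀ x ∈ C, ∀ y ∈ C, x ≠ y → Ω x ∩ Ω y = ∅

/-- One round of the Butterfly Network with node functions `f₁, f₂` (outputs
`(a₅,a₆)` resp. `(a₇,a₈)`), `f₃` (output `a₉`) and `f₄` (outputs `(a₁₀,a₁₁)`),
when the adversary attacks the (single) vulnerable edge indexed by
`e : Fin 7`, where `e = 0,1,2,3` stand for `e₁,e₂,e₃,e₄`, `e = 4` for `e₆`,
`e = 5` for `e₇` and `e = 6` for `e₉`.  The result collects the possible pairs
`(received by T₁, received by T₂)`. -/
def butterflyRound {A : Type*}
    (f₁ f₂ : A → A → A × A) (f₃ : A → A → A) (f₄ : A → A × A)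
    (x : Fin 4 → A) (e : Fin 7) : Set ((A × A) × (A × A)) :=
  { w | ∃ (y : Fin 4 → A) (b₆ b₇ b₉ : A),
      (∀ m : Fin 4, e.val < 4 → m.val ≠ e.val → y m = x m) ∧
      (4 ≤ e.val → y = x) ∧
      (e.val ≠ 4 → b₆ = (f₁ (y 0) (y 1)).2) ∧
      (e.val ≠ 5 → b₇ = (f₂ (y 2) (y 3)).1) ∧
      (e.val ≠ 6 → b₉ = f₃ b₆ b₇) ∧
      w = (((f₁ (y 0) (y 1)).1, (f₄ b₉).1),
           ((f₂ (y 2) (y 3)).2, (f₄ b₉).2)) }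

/-- Scenario A.2 `i`-shot Butterfly channel, as seen by terminal `T₁`: in each
round the adversary independently chooses at most one vulnerable edge to
corrupt, possibly different edges in different rounds. -/
def butterflyA2T1 {A : Type*} (i : ℕ)
    (f₁ f₂ : Fin i → A → A → A × A) (f₃ : Fin i → A → A → A)
    (f₄ : Fin i → A → A × A)
    (x : Fin i → Fin 4 → A) : Set (Fin i → A × A) :=
  { z | ∃ e : Fin i → Fin 7, ∃ w : Fin i → (A × A) × (A × A),
      (∀ j : Fin i, w j ∈ butterflyRound (f₁ j) (f₂ j) (f₃ j) (f₄ j) (x j) (e j)) ∧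
      (∀ j : Fin i, z j = (w j).1) }

/-- Scenario A.2 `i`-shot Butterfly channel, as seen by terminal `T₂`. -/
def butterflyA2T2 {A : Type*} (i : ℕ)
    (f₁ f₂ : Fin i → A → A → A × A) (f₃ : Fin i → A → A → A)
    (f₄ : Fin i → A → A × A)
    (x : Fin i → Fin 4 → A) : Set (Fin i → A × A) :=
  { z | ∃ e : Fin i → Fin 7, ∃ w : Fin i → (A × A) × (A × A),
      (∀ j : Fin i, w j ∈ butterflyRound (f₁ j) (f₂ j) (f₃ j) (f₄ j) (x j) (e j)) ∧
      (∀ j : Fin i, z j = (w j).2) }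
open Finset

section Unambiguous

variable {X Y : Type*}

theorem unambiguous_of_decoder {Ω : X → Set Y} {C : Finset X} (g : Y → X)
    (hg : ∀ x ∈ C, ∀ y ∈ Ω x, g y = x) : Unambiguous Ω C := by
  intro x hx x' hx' hne
  refine Set.eq_empty_of_forall_notMem fun y hy => hne ?_
  rw [← hg x hx y hy.1, hg x' hx' y hy.2]

theorem Unambiguous.card_le_prod_of_pi {ι α : Type*} [Fintype ι] [DecidableEq ι]
    {Ω : ι → X → Set Y} {C : Finset (ι → X)}
    (hC : Unambiguous (fun x => Set.univ.pi fun j => Ω j (x j)) C)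
    (φ : ι → X → α) (S : ι → Finset α) (hφS : ∀ j x, φ j x ∈ S j)
    (hφ : ∀ j u v, φ j u = φ j v → (Ω j u ∩ Ω j v).Nonempty) :
    C.card ≤ ∏ j, (S j).card := by
  rw [← Fintype.card_piFinset]
  refine card_le_card_of_injOn (fun x j => φ j (x j))
    (fun x _ => Fintype.mem_piFinset.2 fun j => hφS j (x j)) fun x hx y hy hxy => ?_
  by_contra hne
  choose z hz using fun j => hφ j (x j) (y j) (congrFun hxy j)
  have hz' : z ∈ (Set.univ.pi fun j => Ω j (x j)) ∩ Set.univ.pi fun j => Ω j (y j) :=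
    ⟨fun j _ => (hz j).1, fun j _ => (hz j).2⟩
  rwa [hC x hx y hy hne] at hz'

end Unambiguous

section Cross

variable {α β γ : Type*}

def crossValues (h : α → β → γ) (s : α) (t : β) : Set γ :=
  {d | ∃ s' t', (s' = s ∨ t' = t) ∧ h s' t' = d}

theorem mem_crossValues_self (h : α → β → γ) (s : α) (t : β) : h s t ∈ crossValues h s t :=
  ⟨s, t, .inl rfl, rfl⟩

/-- Two crosses always meet, so they cannot be constant with different values. -/
theorem exists_forall_crossValues_ne [Nontrivial γ] (h : α → β → γ) :
    ∃ c, ∀ s t, ∃ d ∈ crossValues h s t, d ≠ c := by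
  by_contra! hcon
  obtain ⟨c, c', hne⟩ := exists_pair_ne γ
  obtain ⟨s, _, hs⟩ := hcon c
  obtain ⟨_, t, ht⟩ := hcon c'
  exact hne ((hs _ ⟨s, t, .inl rfl, rfl⟩).symm.trans (ht _ ⟨s, t, .inr rfl, rfl⟩))

theorem exists_crossValues_coloring [Nontrivial γ] (h : α → β → γ) :
    ∃ c, ∃ ψ : α → β → γ, (∀ s t, ψ s t ≠ c) ∧ ∀ s t s₁ t₁, ψ s t = ψ s₁ t₁ →
      h s₁ t₁ ∈ crossValues h s t ∨ h s t ∈ crossValues h s₁ t₁ := by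
  classical
  obtain ⟨c, hc⟩ := exists_forall_crossValues_ne h
  choose d hd hdc using hc
  let ψ s t := if h s t = c then d s t else h s t
  have hψ_mem s t : ψ s t ∈ crossValues h s t := by
    unfold ψ; split_ifs
    exacts [hd s t, mem_crossValues_self h s t]
  refine ⟨c, ψ, fun s t => ?_, fun s t s₁ t₁ hψ => ?_⟩
  · unfold ψ; split_ifs with hst
    exacts [hdc s t, hst]
  by_cases hst : h s t = c
  · by_cases hst₁ : h s₁ t₁ = c
    · exact .inl (hst₁ ▸ hst ▸ mem_crossValues_self h s t)
    · exact .inl (by simpa [ψ, hst₁, hψ] using hψ_mem s t)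
  · exact .inr (by simpa [ψ, hst, ← hψ] using hψ_mem s₁ t₁)

end Cross

section Fanout

variable {A : Type*}

def butterflyFanoutT1 (f₁ f₂ : A → A → A × A) (f₃ : A → A → A) (f₄ : A → A × A)
    (x : Fin 4 → A) : Set (A × A) :=
  ⋃ e, Prod.fst '' butterflyRound f₁ f₂ f₃ f₄ x e

def butterflyFanoutT2 (f₁ f₂ : A → A → A × A) (f₃ : A → A → A) (f₄ : A → A × A)
    (x : Fin 4 → A) : Set (A × A) :=
  ⋃ e, Prod.snd '' butterflyRound f₁ f₂ f₃ f₄ x e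

theorem setOf_exists_forall_mem_eq_pi {ι κ W Z : Type*} (R : ι → κ → Set W) (π : W → Z) :
    {z : ι → Z | ∃ e : ι → κ, ∃ w : ι → W, (∀ j, w j ∈ R j (e j)) ∧ ∀ j, z j = π (w j)} =
      Set.univ.pi fun j => ⋃ e, π '' R j e := by
  ext z
  simp only [Set.mem_pi, Set.mem_univ, true_implies, Set.mem_iUnion, Set.mem_image]
  constructor
  · rintro ⟨e, w, hw, hz⟩ j
    exact ⟨e j, w j, hw j, (hz j).symm⟩
  · intro hz
    choose e w hw hwz using hz
    exact ⟨e, w, hw, fun j => (hwz j).symm⟩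

variable {i : ℕ} (f₁ f₂ : Fin i → A → A → A × A) (f₃ : Fin i → A → A → A)
  (f₄ : Fin i → A → A × A)

theorem butterflyA2T1_eq_pi : butterflyA2T1 i f₁ f₂ f₃ f₄ =
    fun x => Set.univ.pi fun j => butterflyFanoutT1 (f₁ j) (f₂ j) (f₃ j) (f₄ j) (x j) :=
  funext fun _ => setOf_exists_forall_mem_eq_pi _ _

theorem butterflyA2T2_eq_pi : butterflyA2T2 i f₁ f₂ f₃ f₄ =
    fun x => Set.univ.pi fun j => butterflyFanoutT2 (f₁ j) (f₂ j) (f₃ j) (f₄ j) (x j) :=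
  funext fun _ => setOf_exists_forall_mem_eq_pi _ _

end Fanout

section Converse

variable {A : Type*} {f₁ f₂ : A → A → A × A} {f₃ : A → A → A} {f₄ : A → A × A}

theorem mk_mem_butterflyFanoutT1_of_attack_e₉ (x : Fin 4 → A) (b : A) :
    ((f₁ (x 0) (x 1)).1, (f₄ b).1) ∈ butterflyFanoutT1 f₁ f₂ f₃ f₄ x :=
  Set.mem_iUnion.2 ⟨6, _, ⟨x, _, _, b, fun _ h => absurd h (by decide), fun _ => rfl,
    fun _ => rfl, fun _ => rfl, fun h => absurd rfl h, rfl⟩, rfl⟩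

theorem exists_mk_mem_butterflyFanoutT1 {x : Fin 4 → A} {s t : A} (hst : s = x 0 ∨ t = x 1) :
    ∃ b, ((f₁ s t).1, (f₄ b).1) ∈ butterflyFanoutT1 f₁ f₂ f₃ f₄ x := by
  refine ⟨f₃ (f₁ s t).2 (f₂ (x 2) (x 3)).1, Set.mem_iUnion.2 ?_⟩
  rcases hst with rfl | rfl
  · refine ⟨1, _, ⟨Function.update x 1 t, _, _, _, ?_, fun h => absurd h (by decide), fun _ => rfl,
      fun _ => rfl, fun _ => rfl, rfl⟩, ?_⟩
    · intro m _ hm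
      exact Function.update_of_ne (fun h => hm (congrArg Fin.val h)) _ _
    · simp
  · refine ⟨0, _, ⟨Function.update x 0 s, _, _, _, ?_, fun h => absurd h (by decide), fun _ => rfl,
      fun _ => rfl, fun _ => rfl, rfl⟩, ?_⟩
    · intro m _ hm
      exact Function.update_of_ne (fun h => hm (congrArg Fin.val h)) _ _
    · simp

/-- The adversary on `e₁` or `e₂` moves the `e₅`-symbol of `u` along its cross, and the
adversary on `e₉` matches the `e₁₀`-symbol. -/
theorem butterflyFanoutT1_inter_nonempty {u v : Fin 4 → A}
    (h : (f₁ (v 0) (v 1)).1 ∈ crossValues (fun s t => (f₁ s t).1) (u 0) (u 1)) :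
    (butterflyFanoutT1 f₁ f₂ f₃ f₄ u ∩ butterflyFanoutT1 f₁ f₂ f₃ f₄ v).Nonempty := by
  obtain ⟨s, t, hst, heq : (f₁ s t).1 = (f₁ (v 0) (v 1)).1⟩ := h
  obtain ⟨b, hb⟩ := exists_mk_mem_butterflyFanoutT1 (f₂ := f₂) (f₃ := f₃) (f₄ := f₄) hst
  exact ⟨_, hb, heq ▸ mk_mem_butterflyFanoutT1_of_attack_e₉ v b⟩

theorem card_le_of_unambiguous_butterflyA2T1 [Fintype A] (hA : 2 ≤ Fintype.card A) {i : ℕ}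
    {f₁ f₂ : Fin i → A → A → A × A} {f₃ : Fin i → A → A → A} {f₄ : Fin i → A → A × A}
    {C : Finset (Fin i → Fin 4 → A)} (hC : Unambiguous (butterflyA2T1 i f₁ f₂ f₃ f₄) C) :
    C.card ≤ (Fintype.card A - 1) ^ i := by
  classical
  have : Nontrivial A := Fintype.one_lt_card_iff_nontrivial.1 hA
  choose c ψ hψc hψ using fun j => exists_crossValues_coloring fun s t => (f₁ j s t).1
  rw [butterflyA2T1_eq_pi] at hC
  calc C.card ≤ ∏ j, (univ.erase (c j)).card :=
        hC.card_le_prod_of_pi (fun j x => ψ j (x 0) (x 1)) _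
          (fun j x => mem_erase.2 ⟨hψc j _ _, mem_univ _⟩) fun j u v huv =>
          (hψ j _ _ _ _ huv).elim butterflyFanoutT1_inter_nonempty fun h =>
            Set.inter_comm _ _ ▸ butterflyFanoutT1_inter_nonempty h
    _ = (Fintype.card A - 1) ^ i := by simp [card_erase_of_mem]

end Converse

section Achievability

variable {A : Type*} [DecidableEq A] (c₀ : A)

def agreeOrErase (s t : A) : A × A := if s = t then (s, s) else (c₀, c₀)

def fillErasure (b₆ b₇ : A) : A := if b₆ = c₀ then b₇ else b₆

def decodeErasure (p : A × A) : A := if p.1 = c₀ then p.2 else p.1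

/-- A corrupted source edge makes at most one of `V₁`, `V₂` erase, and `V₃` passes on the
other one's symbol; the other vulnerable edges do not reach `e₅` or `e₈`. -/
theorem decodeErasure_of_mem_butterflyRound {a : A} (ha : a ≠ c₀) {e : Fin 7}
    {w : (A × A) × (A × A)}
    (hw : w ∈ butterflyRound (agreeOrErase c₀) (agreeOrErase c₀) (fillErasure c₀)
      (fun b => (b, b)) (fun _ => a) e) :
    decodeErasure c₀ w.1 = a ∧ decodeErasure c₀ w.2 = a := by
  obtain ⟨y, b₆, b₇, b₉, hy, hy', hb₆, hb₇, hb₉, rfl⟩ := hw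
  fin_cases e <;> simp_all [agreeOrErase, fillErasure, decodeErasure] <;> split_ifs <;> simp_all

theorem decodeErasure_of_mem_butterflyFanoutT1 {a : A} (ha : a ≠ c₀) {p : A × A}
    (hp : p ∈ butterflyFanoutT1 (agreeOrErase c₀) (agreeOrErase c₀) (fillErasure c₀)
      (fun b => (b, b)) (fun _ => a)) :
    decodeErasure c₀ p = a := by
  obtain ⟨e, w, hw, rfl⟩ := Set.mem_iUnion.1 hp
  exact (decodeErasure_of_mem_butterflyRound c₀ ha hw).1

theorem decodeErasure_of_mem_butterflyFanoutT2 {a : A} (ha : a ≠ c₀) {p : A × A}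
    (hp : p ∈ butterflyFanoutT2 (agreeOrErase c₀) (agreeOrErase c₀) (fillErasure c₀)
      (fun b => (b, b)) (fun _ => a)) :
    decodeErasure c₀ p = a := by
  obtain ⟨e, w, hw, rfl⟩ := Set.mem_iUnion.1 hp
  exact (decodeErasure_of_mem_butterflyRound c₀ ha hw).2

variable [Fintype A] (i : ℕ)

def repetitionCode : Finset (Fin i → Fin 4 → A) :=
  (Fintype.piFinset fun _ => univ.erase c₀).map
    ⟨(Function.const (Fin 4) ∘ ·), Function.const_injective.comp_left⟩

theorem card_repetitionCode : (repetitionCode c₀ i).card = (Fintype.card A - 1) ^ i := by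
  simp [repetitionCode, card_erase_of_mem]

theorem unambiguous_repetitionCode {Ω : Fin i → (Fin 4 → A) → Set (A × A)}
    (hΩ : ∀ j a, a ≠ c₀ → ∀ p ∈ Ω j (fun _ => a), decodeErasure c₀ p = a) :
    Unambiguous (fun x => Set.univ.pi fun j => Ω j (x j)) (repetitionCode c₀ i) :=
  unambiguous_of_decoder (fun z j _ => decodeErasure c₀ (z j)) fun x hx z hz => by
    obtain ⟨a, ha, rfl⟩ := mem_map.1 hx
    funext j
    exact congrArg (Function.const _)
      (hΩ j (a j) (mem_erase.1 (Fintype.mem_piFinset.1 ha j)).1 (z j) (hz j trivial))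

end Achievability

theorem butterfly_A2_multishot_capacity_general
    (A : Type*) [Fintype A] (hA : 2 ≤ Fintype.card A)
    (i : ℕ) :
    IsGreatest { n : ℕ |
        ∃ (f₁ f₂ : Fin i → A → A → A × A) (f₃ : Fin i → A → A → A)
          (f₄ : Fin i → A → A × A) (C : Finset (Fin i → Fin 4 → A)),
          Unambiguous (butterflyA2T1 i f₁ f₂ f₃ f₄) C ∧
          Unambiguous (butterflyA2T2 i f₁ f₂ f₃ f₄) C ∧ C.card = n }
      ((Fintype.card A - 1) ^ i) := by
  classical
  refine ⟨?_, fun n ⟨f₁, f₂, f₃, f₄, C, hC, _, hn⟩ =>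
    hn ▸ card_le_of_unambiguous_butterflyA2T1 hA hC⟩
  obtain ⟨c₀⟩ : Nonempty A := Fintype.card_pos_iff.1 (by omega)
  refine ⟨fun _ => agreeOrErase c₀, fun _ => agreeOrErase c₀, fun _ => fillErasure c₀,
    fun _ b => (b, b), repetitionCode c₀ i, ?_, ?_, card_repetitionCode c₀ i⟩
  · rw [butterflyA2T1_eq_pi]
    exact unambiguous_repetitionCode c₀ i fun _ _ ha _ =>
      decodeErasure_of_mem_butterflyFanoutT1 c₀ ha
  · rw [butterflyA2T2_eq_pi]
    exact unambiguous_repetitionCode c₀ i fun _ _ ha _ =>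
      decodeErasure_of_mem_butterflyFanoutT2 c₀ ha

/-- Scenario A.2 multishot capacity of the Butterfly Network: the maximum
cardinality of a code that is unambiguous for both terminals, over all choices
of per-round node functions, is `(|A| - 1)^i`. -/
theorem butterfly_A2_multishot_capacity
    (A : Type*) [Fintype A] [DecidableEq A] (hA : 2 ≤ Fintype.card A)
    (i : ℕ) (hi : 1 ≤ i) :
    IsGreatest { n : ℕ |
        ∃ (f₁ f₂ : Fin i → A → A → A × A) (f₃ : Fin i → A → A → A)
          (f₄ : Fin i → A → A × A) (C : Finset (Fin i → Fin 4 → A)),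
          Unambiguous (butterflyA2T1 i f₁ f₂ f₃ f₄) C ∧
          Unambiguous (butterflyA2T2 i f₁ f₂ f₃ f₄) C ∧ C.card = n }
      ((Fintype.card A - 1) ^ i) :=
  butterfly_A2_multishot_capacity_general A hA i
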